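/- arXiv:1503.06527 — 2 statements merged into one kernel-verified Lean document; each statement's English description precedes it below -/
import Mathlib

section
/- For every n ≥ 4, the complete bipartite graph K_{2,n} satisfies m(K_{2,n}) = 4; that is, K_{2,n} is [2,3]-paintable but not [2,4]-paintable. -/
/- # Preliminaries: the online list-coloring (painting) game -/

namespace PaintGame

open SimpleGraph

/-- `X` is an independent set of vertices of `G`. -/
def IndepOn {V : Type} (G : SimpleGraph V) (X : Finset V) : Prop :=
  ∀ u ∈ X, ∀ w ∈ X, ¬ G.Adj u w

/-- Decrease the remaining mark-capacity of every vertex in the marked set `M` by one. -/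
def decMark {V : Type} [DecidableEq V] (f : V → ℕ) (M : Finset V) : V → ℕ :=
  fun v => if v ∈ M then f v - 1 else f v

theorem decMark_lt {V : Type} [Fintype V] [DecidableEq V] (f : V → ℕ) (M : Finset V)
    (hne : M.Nonempty) (hf : ∀ v ∈ M, 1 ≤ f v) :
    ∑ v, decMark f M v < ∑ v, f v := by
  obtain ⟨v₀, hv₀⟩ := hne
  apply Finset.sum_lt_sum
  · intro i _
    unfold decMark
    split <;> omega
  · refine ⟨v₀, Finset.mem_univ v₀, ?_⟩
    have := hf v₀ hv₀
    simp only [decMark, if_pos hv₀]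
    omega

/-- Painter wins the (unbounded) painting game on `G` from the position in which `U` is the
set of uncolored vertices and `f v` is the number of further times `v` may be marked.
Each round, Lister marks a nonempty set `M` of uncolored vertices, each of which may still
be marked; Painter then colors an independent subset `X` of `M`.  Painter wins when every
vertex is colored; Painter has lost if some uncolored vertex can no longer be marked. -/
def PaintFrom {V : Type} [Fintype V] [DecidableEq V] (G : SimpleGraph V)
    (f : V → ℕ) (U : Finset V) : Prop :=
  U = ∅ ∨ ((∀ v ∈ U, 1 ≤ f v) ∧
    ∀ M : Finset V, M ⊆ U → (hne : M.Nonempty) → (hf : ∀ v ∈ M, 1 ≤ f v) →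
      ∃ X : Finset V, X ⊆ M ∧ IndepOn G X ∧ PaintFrom G (decMark f M) (U \ X))
termination_by ∑ v, f v
decreasing_by exact decMark_lt f M hne hf

/-- `G` is `f`-paintable: Painter can guarantee that every vertex of `G` gets colored
while no vertex `v` is marked more than `f v` times. -/
def Paintable {V : Type} [Fintype V] [DecidableEq V] (G : SimpleGraph V) (f : V → ℕ) : Prop :=
  PaintFrom G f Finset.univ

/-- Painter wins the painting game on `G` lasting exactly `t` further rounds, where `U`
is the set of uncolored vertices and each vertex `v` must be marked in exactly `f v` of the
remaining rounds.  Each round Lister marks a nonempty set `M` of vertices that can still be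
marked (colored vertices may be marked, since the marked sets are the color classes of a
fixed list assignment using exactly `t` colors); Painter colors an independent set
`X ⊆ M` of uncolored vertices.  At the end, Painter wins if every vertex got colored, or by
default if Lister failed to mark every vertex `v` exactly `f v` times. -/
def PaintFromIn {V : Type} [DecidableEq V] (G : SimpleGraph V) :
    ℕ → (V → ℕ) → Finset V → Prop
  | 0, f, U => U = ∅ ∨ ∃ v, f v ≠ 0
  | (t + 1), f, U =>
      ∀ M : Finset V, M.Nonempty → (∀ v ∈ M, 1 ≤ f v) →
        ∃ X : Finset V, X ⊆ M ∩ U ∧ IndepOn G X ∧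
          PaintFromIn G t (decMark f M) (U \ X)

/-- `G` is `[f,t]`-paintable: Painter can guarantee that every vertex gets colored in the
painting game on `G` lasting exactly `t` rounds, in which Lister must mark each vertex `v`
in exactly `f v` of the `t` (nonempty) marked sets. -/
def PaintableIn {V : Type} [Fintype V] [DecidableEq V]
    (G : SimpleGraph V) (f : V → ℕ) (t : ℕ) : Prop :=
  PaintFromIn G t f Finset.univ

/-- `m(G,f)`: the minimum `t ≥ max {f v : v ∈ V(G)}` for which `G` is not
`[f,t]`-paintable. -/
noncomputable def mval {V : Type} [Fintype V] [DecidableEq V]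
    (G : SimpleGraph V) (f : V → ℕ) : ℕ :=
  sInf {t | (∀ v, f v ≤ t) ∧ ¬ PaintableIn G f t}

/-- `M(G,f)`: the maximum `t` for which `G` is not `[f,t]`-paintable. -/
noncomputable def Mval {V : Type} [Fintype V] [DecidableEq V]
    (G : SimpleGraph V) (f : V → ℕ) : ℕ :=
  sSup {t | ¬ PaintableIn G f t}

/-- `ListerForce G f U c`: in the painting game on `G` (uncolored set `U`, each vertex `v`
markable at most `f v` more times), Lister can force the appearance of an uncolorable vertex
(an uncolored vertex that can no longer be marked) while spending at most `c` in total,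
where a round with marked set `M` costs `|M| - 1`. -/
def ListerForce {V : Type} [Fintype V] [DecidableEq V] (G : SimpleGraph V)
    (f : V → ℕ) (U : Finset V) (c : ℕ) : Prop :=
  (∃ v ∈ U, f v = 0) ∨
    ∃ M : Finset V, M ⊆ U ∧ ∃ hne : M.Nonempty, ∃ hf : ∀ v ∈ M, 1 ≤ f v,
      ∃ c', M.card - 1 + c' ≤ c ∧
        ∀ X : Finset V, X ⊆ M → IndepOn G X →
          ListerForce G (decMark f M) (U \ X) c'
termination_by ∑ v, f v
decreasing_by exact decMark_lt f M hne hf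

/-- `q(G,f)`: the minimum total cost `Σᵢ (|Vᵢ| - 1)` that Lister can guarantee while
forcing an uncolorable vertex, over plays in which each vertex `v` is marked at most
`f v` times. -/
noncomputable def qval {V : Type} [Fintype V] [DecidableEq V]
    (G : SimpleGraph V) (f : V → ℕ) : ℕ :=
  sInf {c | ListerForce G f Finset.univ c}

/- # Graph containments -/

/-- `G` contains an odd cycle. -/
def HasOddCycle {V : Type} (G : SimpleGraph V) : Prop :=
  ∃ (v : V) (c : G.Walk v v), c.IsCycle ∧ Odd c.length

/-- `G` contains a triangle `C₃`. -/
def HasTriangle {V : Type} (G : SimpleGraph V) : Prop :=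
  ∃ u v w : V, G.Adj u v ∧ G.Adj v w ∧ G.Adj u w

/-- `G` contains the theta graph `θ_{p,q,r}`: two vertices joined by three internally
disjoint paths with `p`, `q` and `r` edges respectively. -/
def HasTheta {V : Type} (G : SimpleGraph V) (p q r : ℕ) : Prop :=
  ∃ (u v : V) (P Q R : G.Walk u v),
    P.IsPath ∧ Q.IsPath ∧ R.IsPath ∧
    P.length = p ∧ Q.length = q ∧ R.length = r ∧
    (∀ x, x ∈ P.support → x ∈ Q.support → x = u ∨ x = v) ∧
    (∀ x, x ∈ P.support → x ∈ R.support → x = u ∨ x = v) ∧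
    (∀ x, x ∈ Q.support → x ∈ R.support → x = u ∨ x = v)

/-- `G` contains a graph of the form `C_m·P_k·C_n`: two cycles joined by a path, the
cycles being vertex disjoint, except that when the path is trivial (`k = 1`) the two
cycles share exactly one vertex. -/
def HasDumbbell {V : Type} (G : SimpleGraph V) : Prop :=
  ∃ (a b : V) (c : G.Walk a a) (d : G.Walk b b) (W : G.Walk a b),
    c.IsCycle ∧ d.IsCycle ∧ W.IsPath ∧
    (∀ x, x ∈ c.support → x ∈ d.support → x = a ∧ x = b) ∧
    (∀ x, x ∈ W.support → x ∈ c.support → x = a) ∧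
    (∀ x, x ∈ W.support → x ∈ d.support → x = b)

/-- `G` contains a copy of `H` as a (not necessarily induced) subgraph. -/
def ContainsCopy {W V : Type} (H : SimpleGraph W) (G : SimpleGraph V) : Prop :=
  ∃ φ : H →g G, Function.Injective φ

/-- `G` contains a member of the family `𝔉₃`: some `θ_{p,q,r}` that is not isomorphic to
any `θ_{2,2,2k}`. -/
def ContainsF3 {V : Type} (G : SimpleGraph V) : Prop :=
  ∃ p q r : ℕ, HasTheta G p q r ∧ ∀ k : ℕ, ({p, q, r} : Multiset ℕ) ≠ {2, 2, 2 * k}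

/-- `G` contains a member of the family `𝔉₄ = {θ_{2,2,2k} : k ≥ 2}`. -/
def ContainsF4 {V : Type} (G : SimpleGraph V) : Prop :=
  ∃ k : ℕ, 2 ≤ k ∧ HasTheta G 2 2 (2 * k)

/- # The core of a graph -/

open Classical in
/-- Delete from `S` all vertices having exactly one neighbour (in `G`) inside `S`. -/
noncomputable def coreStep {V : Type} [DecidableEq V] (G : SimpleGraph V)
    (S : Finset V) : Finset V :=
  S.filter fun v => ¬ ((S.filter fun w => G.Adj v w).card = 1)

/-- The vertex set of the core of `G`: iteratively delete all vertices of degree 1. -/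
noncomputable def coreSet {V : Type} [Fintype V] [DecidableEq V] (G : SimpleGraph V) :
    Finset V :=
  (coreStep G)^[Fintype.card V] Finset.univ

/-- The core of `G`: the subgraph of `G` obtained by the iterated removal of all
vertices of degree 1. -/
noncomputable def coreGraph {V : Type} [Fintype V] [DecidableEq V] (G : SimpleGraph V) :
    SimpleGraph ↥((coreSet G : Set V)) :=
  G.induce (coreSet G : Set V)

end PaintGame

open SimpleGraph PaintGame

/-!
Painter wins the three-round game by coloring, among the marked vertices, both left vertices if
both are marked and the right vertices otherwise. In the second case an unmarked left vertex
needs a mark in each of the two remaining rounds, so in the next round Lister must mark it and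
every uncolored right vertex, or lose the last round by default; by the same rule Painter then
leaves only an independent set to be colored in the last round.

Lister wins the four-round game by playing the color classes of the lists `{0, 1}` and `{2, 3}` on
the two left vertices and `{a, b}` (`a ∈ {0, 1}`, `b ∈ {2, 3}`) on four right vertices: if the left
vertices get the colors `a` and `b`, the right vertex with list `{a, b}` cannot be colored.
-/

open Finset Sum

namespace PaintGame

variable {V : Type} {G : SimpleGraph V}

theorem IndepOn.mono {X Y : Finset V} (hY : IndepOn G Y) (h : X ⊆ Y) : IndepOn G X :=
  fun u hu w hw => hY u (h hu) w (h hw)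

theorem indepOn_empty : IndepOn G ∅ := by
  simp [IndepOn]

variable [DecidableEq V]

theorem decMark_of_mem {f : V → ℕ} {M : Finset V} {v : V} (h : v ∈ M) :
    decMark f M v = f v - 1 :=
  if_pos h

theorem decMark_of_notMem {f : V → ℕ} {M : Finset V} {v : V} (h : v ∉ M) :
    decMark f M v = f v :=
  if_neg h

theorem sub_one_le_decMark (f : V → ℕ) (M : Finset V) (v : V) : f v - 1 ≤ decMark f M v := by
  unfold decMark; split <;> omega

theorem paintFromIn_of_lt : ∀ {t : ℕ} {f : V → ℕ} {U : Finset V},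
    (∃ v, t < f v) → PaintFromIn G t f U
  | 0, _, _, ⟨v, hv⟩ => Or.inr ⟨v, by omega⟩
  | _ + 1, f, _, ⟨v, hv⟩ => fun M _ _ =>
    ⟨∅, empty_subset _, indepOn_empty,
      paintFromIn_of_lt ⟨v, by have := sub_one_le_decMark f M v; omega⟩⟩

/-- Painter colors every marked uncolored vertex. -/
theorem paintFromIn_of_indepOn {t : ℕ} {f : V → ℕ} {U : Finset V} (ht : t ≠ 0)
    (hU : IndepOn G U) (hf : ∀ v ∈ U, 1 ≤ f v) : PaintFromIn G t f U := by
  induction t generalizing f U with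
  | zero => exact absurd rfl ht
  | succ t ih =>
    intro M _ _
    refine ⟨M ∩ U, subset_rfl, hU.mono inter_subset_right, ?_⟩
    have hf' : ∀ v ∈ U \ (M ∩ U), 1 ≤ decMark f M v := fun v hv => by
      rw [mem_sdiff, mem_inter] at hv
      rw [decMark_of_notMem fun hM => hv.2 ⟨hM, hv.1⟩]
      exact hf v hv.1
    rcases t with _ | t
    · exact (U \ (M ∩ U)).eq_empty_or_nonempty.imp id
        fun ⟨v, hv⟩ => ⟨v, by have := hf' v hv; omega⟩
    · exact ih t.succ_ne_zero (hU.mono sdiff_subset) hf'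

theorem PaintFromIn.exists_indepOn_cover : ∀ {t : ℕ} {f : V → ℕ} {U : Finset V}
    (M : ℕ → Finset V), PaintFromIn G t f U → (∀ i < t, (M i).Nonempty) →
    (∀ v, f v = ∑ i ∈ range t, if v ∈ M i then 1 else 0) →
    ∃ X : ℕ → Finset V, (∀ i < t, X i ⊆ M i ∧ IndepOn G (X i)) ∧ ∀ v ∈ U, ∃ i < t, v ∈ X i
  | 0, _, _, _, h, _, hf => ⟨fun _ => ∅, by simp, by
      rcases h with rfl | ⟨v, hv⟩
      · simp
      · simp [hf] at hv⟩
  | t + 1, f, U, M, h, hne, hf => by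
    have hf0 : ∀ v ∈ M 0, 1 ≤ f v := fun v hv => by rw [hf v, sum_range_succ']; simp [hv]
    obtain ⟨X₀, hX₀, hX₀G, h'⟩ := h (M 0) (hne 0 t.succ_pos) hf0
    have hf' : ∀ v, decMark f (M 0) v = ∑ i ∈ range t, if v ∈ M (i + 1) then 1 else 0 :=
      fun v => by unfold decMark; rw [hf v, sum_range_succ']; split_ifs <;> simp
    obtain ⟨X, hX, hcover⟩ := exists_indepOn_cover (fun i => M (i + 1)) h'
      (fun i hi => hne (i + 1) (by omega)) hf'
    refine ⟨fun | 0 => X₀ | i + 1 => X i, ?_, fun v hv => ?_⟩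
    · rintro (_ | i) hi
      · exact ⟨hX₀.trans inter_subset_left, hX₀G⟩
      · exact hX i (by omega)
    · by_cases hv₀ : v ∈ X₀
      · exact ⟨0, t.succ_pos, hv₀⟩
      · obtain ⟨i, hi, hvi⟩ := hcover v (mem_sdiff.2 ⟨hv, hv₀⟩)
        exact ⟨i + 1, by omega, hvi⟩

/-- Lister marks the color classes `{v | i ∈ L v}` in the rounds `i = 0, …, t - 1`. -/
theorem not_paintableIn_of_forall_coloring [Fintype V] {f : V → ℕ} {t : ℕ} (L : V → Finset ℕ)
    (hL : ∀ v, L v ⊆ range t) (hcard : ∀ v, #(L v) = f v) (hne : ∀ i < t, ∃ v, i ∈ L v)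
    (hcol : ∀ C : G.Coloring ℕ, ∃ v, C v ∉ L v) : ¬ PaintableIn G f t := by
  intro h
  obtain ⟨X, hX, hcover⟩ := h.exists_indepOn_cover (fun i => univ.filter (i ∈ L ·))
    (fun i hi => (hne i hi).imp fun v hv => by simp [hv])
    (fun v => by simp [inter_eq_right.2 (hL v), hcard])
  choose c hc hcX using fun v => hcover v (mem_univ v)
  obtain ⟨v, hv⟩ := hcol (Coloring.mk c fun {u w} huw heq =>
    (hX (c u) (hc u)).2 u (hcX u) w (heq ▸ hcX w) huw)
  exact hv (mem_filter.1 ((hX _ (hc v)).1 (hcX v))).2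

theorem mval_eq_of_forall_lt [Fintype V] {f : V → ℕ} {t : ℕ} (hf : ∀ v, f v ≤ t)
    (ht : ¬ PaintableIn G f t) (hlt : ∀ s < t, (∀ v, f v ≤ s) → PaintableIn G f s) :
    mval G f = t :=
  le_antisymm (Nat.sInf_le ⟨hf, ht⟩)
    (le_csInf ⟨t, hf, ht⟩ fun s ⟨hs, hns⟩ => not_lt.1 fun hst => hns (hlt s hst hs))

end PaintGame

section CompleteBipartite

variable {α β : Type}

theorem indepOn_completeBipartiteGraph_of_isLeft {X : Finset (α ⊕ β)}
    (h : ∀ v ∈ X, v.isLeft) : IndepOn (completeBipartiteGraph α β) X := by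
  intro u hu w hw huw
  have := h u hu
  have := h w hw
  rcases u with _ | _ <;> rcases w with _ | _ <;> simp_all

theorem indepOn_completeBipartiteGraph_of_isRight {X : Finset (α ⊕ β)}
    (h : ∀ v ∈ X, v.isRight) : IndepOn (completeBipartiteGraph α β) X := by
  intro u hu w hw huw
  have := h u hu
  have := h w hw
  rcases u with _ | _ <;> rcases w with _ | _ <;> simp_all

variable [DecidableEq α] [DecidableEq β]

theorem exists_winning_move_of_left_marked {t : ℕ} {f : α ⊕ β → ℕ} {U M : Finset (α ⊕ β)}
    (ht : t ≠ 0) (hM : ∀ i, inl i ∈ U → inl i ∈ M) (hR : ∀ w, inr w ∈ U → 2 ≤ f (inr w)) :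
    ∃ X, X ⊆ M ∩ U ∧ IndepOn (completeBipartiteGraph α β) X ∧
      PaintFromIn (completeBipartiteGraph α β) t (decMark f M) (U \ X) := by
  refine ⟨U.filter (·.isLeft), fun v hv => ?_,
    indepOn_completeBipartiteGraph_of_isLeft fun v hv => (mem_filter.1 hv).2,
    paintFromIn_of_indepOn ht (indepOn_completeBipartiteGraph_of_isRight fun v hv => ?_)
      fun v hv => ?_⟩
  · rcases v with i | w <;> simp_all
  · rcases v with i | w <;> simp_all
  · rcases v with i | w
    · simp_all
    · have := hR w (mem_sdiff.1 hv).1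
      have := sub_one_le_decMark f M (inr w)
      omega

/-- Lister must mark the left vertex that still needs two marks, and every uncolored right vertex,
in the next round: otherwise Painter wins the last round by default. -/
theorem paintFromIn_two {f : Fin 2 ⊕ β → ℕ} {U : Finset (Fin 2 ⊕ β)} (hU : ∀ v ∈ U, 1 ≤ f v)
    (hR : ∀ w, inr w ∈ U → f (inr w) = 2) (hL : ∃ i, inl i ∈ U ∧ f (inl i) = 2) :
    PaintFromIn (completeBipartiteGraph (Fin 2) β) 2 f U := by
  obtain ⟨i₀, hi₀U, hi₀⟩ := hL
  intro M _ _
  by_cases hM : ∀ i, inl i ∈ U → inl i ∈ M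
  · exact exists_winning_move_of_left_marked one_ne_zero hM fun w hw => (hR w hw).ge
  push Not at hM
  obtain ⟨i₁, hi₁U, hi₁M⟩ := hM
  refine ⟨(M ∩ U).filter (·.isRight), filter_subset _ _,
    indepOn_completeBipartiteGraph_of_isRight fun v hv => (mem_filter.1 hv).2, ?_⟩
  show PaintFromIn _ 1 _ _
  by_cases hi₀M : inl i₀ ∉ M
  · exact paintFromIn_of_lt ⟨inl i₀, by rw [decMark_of_notMem hi₀M, hi₀]; omega⟩
  by_cases hRM : ∃ w, inr w ∈ U ∧ inr w ∉ M
  · obtain ⟨w, hwU, hwM⟩ := hRM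
    exact paintFromIn_of_lt ⟨inr w, by rw [decMark_of_notMem hwM, hR w hwU]; omega⟩
  push Not at hi₀M hRM
  have hleft : ∀ w, inr w ∉ U \ (M ∩ U).filter (·.isRight) := fun w hw =>
    have hwU := (mem_sdiff.1 hw).1
    (mem_sdiff.1 hw).2 (mem_filter.2 ⟨mem_inter.2 ⟨hRM w hwU, hwU⟩, rfl⟩)
  refine paintFromIn_of_indepOn one_ne_zero
    (indepOn_completeBipartiteGraph_of_isLeft fun v hv => ?_) fun v hv => ?_
  · rcases v with i | w
    · rfl
    · exact absurd hv (hleft w)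
  · rcases v with i | w
    · by_cases hiM : inl i ∈ M
      · obtain rfl : i = i₀ := by
          have : i ≠ i₁ := by rintro rfl; exact hi₁M hiM
          have : i₀ ≠ i₁ := by rintro rfl; exact hi₁M hi₀M
          omega
        rw [decMark_of_mem hiM, hi₀]
      · rw [decMark_of_notMem hiM]
        exact hU _ (mem_sdiff.1 hv).1
    · exact absurd hv (hleft w)

variable [Fintype β]

theorem paintableIn_completeBipartiteGraph_two :
    PaintableIn (completeBipartiteGraph (Fin 2) β) (fun _ => 2) 2 :=
  paintFromIn_two (by simp) (fun _ _ => rfl) ⟨0, mem_univ _, rfl⟩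

theorem paintableIn_completeBipartiteGraph_three :
    PaintableIn (completeBipartiteGraph (Fin 2) β) (fun _ => 2) 3 := by
  intro M _ _
  by_cases hM : ∀ i, inl i ∈ M
  · exact exists_winning_move_of_left_marked two_ne_zero (fun i _ => hM i) fun _ _ => le_rfl
  push Not at hM
  obtain ⟨i₁, hi₁M⟩ := hM
  refine ⟨M.filter (·.isRight), fun v hv => ?_,
    indepOn_completeBipartiteGraph_of_isRight fun v hv => (mem_filter.1 hv).2,
    paintFromIn_two (fun v _ => ?_) (fun w hw => ?_) ⟨i₁, by simp, decMark_of_notMem hi₁M⟩⟩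
  · simp_all
  · have := sub_one_le_decMark (fun _ => 2) M v
    omega
  · exact decMark_of_notMem fun hwM => (mem_sdiff.1 hw).2 (mem_filter.2 ⟨hwM, rfl⟩)

end CompleteBipartite

section ListerStrategy

variable {n : ℕ}

/-- The right vertex `2 * a + (b - 2)` with `a ∈ {0, 1}`, `b ∈ {2, 3}` gets the list `{a, b}`. -/
def badLists (n : ℕ) : Fin 2 ⊕ Fin n → Finset ℕ
  | inl i => {2 * (i : ℕ), 2 * (i : ℕ) + 1}
  | inr j => if (j : ℕ) < 4 then {(j : ℕ) / 2, 2 + (j : ℕ) % 2} else {0, 2}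

theorem badLists_subset_range (v : Fin 2 ⊕ Fin n) : badLists n v ⊆ range 4 := by
  rcases v with i | j
  · simp [badLists, insert_subset_iff]; omega
  · simp only [badLists]
    split_ifs <;> simp [insert_subset_iff]
    omega

theorem card_badLists (v : Fin 2 ⊕ Fin n) : #(badLists n v) = 2 := by
  rcases v with i | j
  · simp [badLists]
  · simp only [badLists]; split_ifs <;> rw [card_pair (by omega)]

theorem exists_coloring_notMem_badLists (hn : 4 ≤ n)
    (C : (completeBipartiteGraph (Fin 2) (Fin n)).Coloring ℕ) : ∃ v, C v ∉ badLists n v := by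
  by_contra! hC
  have ha : C (inl 0) = 0 ∨ C (inl 0) = 1 := by simpa [badLists] using hC (inl 0)
  have hb : C (inl 1) = 2 ∨ C (inl 1) = 3 := by simpa [badLists] using hC (inl 1)
  let j : Fin n := ⟨2 * C (inl 0) + (C (inl 1) - 2), by omega⟩
  have hj : C (inr j) = C (inl 0) ∨ C (inr j) = C (inl 1) := by
    have hjv : (j : ℕ) = 2 * C (inl 0) + (C (inl 1) - 2) := rfl
    have hj := hC (inr j)
    simp [badLists, show (j : ℕ) < 4 by omega] at hj
    omega
  rcases hj with hj | hj
  · exact C.valid (v := inl 0) (w := inr j) (by simp) hj.symm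
  · exact C.valid (v := inl 1) (w := inr j) (by simp) hj.symm

theorem not_paintableIn_completeBipartiteGraph_four (hn : 4 ≤ n) :
    ¬ PaintableIn (completeBipartiteGraph (Fin 2) (Fin n)) (fun _ => 2) 4 :=
  not_paintableIn_of_forall_coloring (badLists n) badLists_subset_range card_badLists
    (fun i hi => ⟨inl ⟨i / 2, by omega⟩, by simp [badLists]; omega⟩)
    (exists_coloring_notMem_badLists hn)

end ListerStrategy

/-- Lemma `theta2`.  For every `n ≥ 4`, the complete bipartite graph
`K_{2,n}` satisfies `m(K_{2,n}) = 4`; that is, `K_{2,n}` is `[2,3]`-paintable but not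
`[2,4]`-paintable. -/
theorem mval_completeBipartite (n : ℕ) (hn : 4 ≤ n) :
    PaintGame.mval (completeBipartiteGraph (Fin 2) (Fin n)) (fun _ => 2) = 4 ∧
    PaintGame.PaintableIn (completeBipartiteGraph (Fin 2) (Fin n)) (fun _ => 2) 3 ∧
    ¬ PaintGame.PaintableIn (completeBipartiteGraph (Fin 2) (Fin n)) (fun _ => 2) 4 := by
  have hfour := not_paintableIn_completeBipartiteGraph_four hn
  refine ⟨mval_eq_of_forall_lt (fun _ => by norm_num) hfour fun s hs h2 => ?_,
    paintableIn_completeBipartiteGraph_three, hfour⟩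
  have : 2 ≤ s := h2 (inl 0)
  interval_cases s
  exacts [paintableIn_completeBipartiteGraph_two, paintableIn_completeBipartiteGraph_three]
end

section
/- For every n ≥ 3, the path P_n on n vertices is not [f'',t]-paintable for every integer t with 2 ≤ t ≤ 2n − 2 − log₂ n. -/
open SimpleGraph PaintGame

namespace Aux
open Finset

def cdiv (a b : ℕ) : ℕ := (a + b - 1) / b

lemma cdiv_le_iff {b : ℕ} (hb : 0 < b) {a c : ℕ} : cdiv a b ≤ c ↔ a ≤ b * c := by
  unfold cdiv
  rw [Nat.div_le_iff_le_mul_add_pred hb]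
  omega

lemma le_mul_cdiv {b : ℕ} (hb : 0 < b) (a : ℕ) : a ≤ b * cdiv a b := by
  unfold cdiv
  have h := Nat.div_add_mod (a + b - 1) b
  have h2 := Nat.mod_lt (a + b - 1) hb
  omega

lemma cdiv_mono {a a' b : ℕ} (h : a ≤ a') : cdiv a b ≤ cdiv a' b := by
  unfold cdiv
  exact Nat.div_le_div_right (by omega)

lemma cdiv_one (a : ℕ) : cdiv a 1 = a := by simp [cdiv]

lemma cdiv_pow_succ (a d : ℕ) : cdiv a (2^(d+1)) ≤ cdiv (cdiv a (2^d)) 2 := by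
  rw [cdiv_le_iff (by positivity)]
  calc a ≤ 2^d * cdiv a (2^d) := le_mul_cdiv (by positivity) a
  _ ≤ 2^d * (2 * cdiv (cdiv a (2^d)) 2) := by
      exact Nat.mul_le_mul_left _ (le_mul_cdiv (by norm_num) _)
  _ = 2^(d+1) * cdiv (cdiv a (2^d)) 2 := by ring

lemma cdiv_half_pow {m' m j : ℕ} (hj : 1 ≤ j) (h : m' ≤ cdiv m 2) :
    cdiv m' (2^(j-1)) ≤ cdiv m (2^j) := by
  calc cdiv m' (2^(j-1)) ≤ cdiv (cdiv m 2) (2^(j-1)) := cdiv_mono h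
  _ ≤ cdiv m (2^j) := by
      rw [cdiv_le_iff (by positivity), cdiv_le_iff (by norm_num)]
      have : (2:ℕ) * (2^(j-1) * cdiv m (2^j)) = 2^j * cdiv m (2^j) := by
        rw [← mul_assoc, ← pow_succ']
        congr 2
        omega
      rw [this]
      exact le_mul_cdiv (by positivity) m

lemma two_le_cdiv {a d : ℕ} (h : 2^d < a) : 2 ≤ cdiv a (2^d) := by
  by_contra hc
  push_neg at hc
  have := (cdiv_le_iff (b := 2^d) (by positivity) (a := a) (c := 1)).1 (by omega)
  omega

lemma cdiv_add_le (n : ℕ) : ∀ d, 2^d < n → cdiv n (2^d) + d ≤ n := by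
  intro d
  induction d with
  | zero => simp [cdiv_one]
  | succ d ih =>
    intro h
    have h' : 2^d < n :=
      lt_of_le_of_lt (Nat.pow_le_pow_right (by norm_num) (Nat.le_succ d)) h
    have h2 := two_le_cdiv h'
    have h3 : cdiv n (2^(d+1)) ≤ cdiv (cdiv n (2^d)) 2 := cdiv_pow_succ n d
    have h4 : cdiv (cdiv n (2^d)) 2 ≤ cdiv n (2^d) - 1 := by
      rw [cdiv_le_iff (by norm_num)]
      omega
    have := ih h'
    omega

end Aux

section Aux2
open Finset PaintGame

variable {V : Type} [Fintype V] [DecidableEq V]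

lemma sum_decMark (f : V → ℕ) (M : Finset V) (hf : ∀ v ∈ M, 1 ≤ f v) :
    ∑ v, decMark f M v + M.card = ∑ v, f v := by
  have key : ∀ v : V, decMark f M v + (if v ∈ M then 1 else 0) = f v := by
    intro v
    by_cases h : v ∈ M <;> simp [decMark, h]
    exact Nat.sub_add_cancel (hf v h)
  calc ∑ v, decMark f M v + M.card
      = ∑ v, decMark f M v + ∑ v : V, (if v ∈ M then 1 else 0) := by
        rw [Finset.sum_ite_mem, Finset.univ_inter, Finset.sum_const, smul_eq_mul, mul_one]
    _ = ∑ v, (decMark f M v + if v ∈ M then 1 else 0) := (Finset.sum_add_distrib).symm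
    _ = ∑ v, f v := Finset.sum_congr rfl (fun v _ => key v)

/-- The padding lemma: once some uncolored vertex has no marks left, and the remaining
marks are enough for the remaining rounds (but no vertex needs more rounds than remain),
Lister wins. -/
lemma pad_lemma (G : SimpleGraph V) (r : ℕ) :
    ∀ (f : V → ℕ) (U : Finset V), (∃ u ∈ U, f u = 0) → (∀ v, f v ≤ r) →
    r ≤ ∑ v, f v → ¬ PaintFromIn G r f U := by
  induction r with
  | zero =>
    rintro f U ⟨u, hu, hfu⟩ hmax _ h
    rcases h with h | ⟨v, hv⟩
    · rw [h] at hu; exact absurd hu (Finset.notMem_empty u)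
    · exact hv (Nat.le_zero.1 (hmax v))
  | succ r ih =>
    rintro f U ⟨u, hu, hfu⟩ hmax hsum hP
    set T : Finset V := Finset.univ.filter (fun v => f v = r + 1) with hT
    by_cases hTne : T.Nonempty
    · -- mark all vertices that must be marked every remaining round
      obtain ⟨X, hXM, _, hP'⟩ := hP T hTne (by
        intro v hv
        rw [hT, Finset.mem_filter] at hv
        omega)
      have huX : u ∉ X := fun hux => by
        have := hXM hux
        rw [Finset.mem_inter, hT, Finset.mem_filter] at this
        omega
      refine ih (decMark f T) (U \ X) ⟨u, Finset.mem_sdiff.2 ⟨hu, huX⟩, ?_⟩ ?_ ?_ hP'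
      · simp only [decMark]
        split <;> rename_i h
        · rw [hT, Finset.mem_filter] at h; omega
        · exact hfu
      · intro v
        simp only [decMark]
        split <;> rename_i h
        · have := hmax v; omega
        · rw [hT, Finset.mem_filter] at h
          push_neg at h
          have := hmax v
          have := h (Finset.mem_univ v)
          omega
      · have hsub : ∑ v, decMark f T v + T.card = ∑ v, f v :=
          sum_decMark f T (by intro v hv; rw [hT, Finset.mem_filter] at hv; omega)
        have hTsum : T.card * (r + 1) ≤ ∑ v, f v := by
          have h1 : ∑ v ∈ T, f v = T.card * (r + 1) := by
            rw [Finset.sum_eq_card_nsmul (fun v hv => by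
              rw [hT, Finset.mem_filter] at hv; exact hv.2)]
            simp [smul_eq_mul]
          rw [← h1]
          exact Finset.sum_le_sum_of_subset (Finset.subset_univ T)
        obtain ⟨w, hw⟩ := hTne
        have hT1 : 1 ≤ T.card := Finset.card_pos.2 ⟨w, hw⟩
        nlinarith
    · -- mark a single vertex with positive remaining marks
      have hmax' : ∀ v, f v ≤ r := by
        intro v
        have h1 := hmax v
        by_contra hc
        exact hTne ⟨v, by rw [hT, Finset.mem_filter]; exact ⟨Finset.mem_univ v, by omega⟩⟩
      have : ∃ w : V, 1 ≤ f w := by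
        by_contra hc
        push_neg at hc
        have : ∑ v, f v = 0 := Finset.sum_eq_zero (fun v _ => by have := hc v; omega)
        omega
      obtain ⟨w, hw⟩ := this
      obtain ⟨X, hXM, _, hP'⟩ := hP {w} ⟨w, Finset.mem_singleton_self w⟩
        (by intro v hv; rw [Finset.mem_singleton] at hv; subst hv; exact hw)
      have huX : u ∉ X := fun hux => by
        have h2 := (Finset.mem_inter.1 (hXM hux)).1
        rw [Finset.mem_singleton] at h2
        subst h2
        omega
      refine ih (decMark f {w}) (U \ X) ⟨u, Finset.mem_sdiff.2 ⟨hu, huX⟩, ?_⟩ ?_ ?_ hP'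
      · simp only [decMark]
        split <;> rename_i h
        · rw [Finset.mem_singleton] at h; subst h; omega
        · exact hfu
      · intro v
        simp only [decMark]
        split <;> [skip; skip] <;> have := hmax' v <;> omega
      · have hsub : ∑ v, decMark f {w} v + ({w} : Finset V).card = ∑ v, f v :=
          sum_decMark f {w} (by intro v hv; rw [Finset.mem_singleton] at hv; subst hv; exact hw)
        rw [Finset.card_singleton] at hsub
        omega

end Aux2

section MainAux
set_option maxHeartbeats 1000000
open Finset PaintGame SimpleGraph

lemma pf_elim {V : Type} [DecidableEq V] {G : SimpleGraph V} {t : ℕ} {f : V → ℕ}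
    {U : Finset V} (h : PaintFromIn G t f U) (ht : 1 ≤ t)
    (M : Finset V) (hne : M.Nonempty) (hf : ∀ v ∈ M, 1 ≤ f v) :
    ∃ X, X ⊆ M ∩ U ∧ IndepOn G X ∧ PaintFromIn G (t-1) (decMark f M) (U \ X) := by
  obtain ⟨t', rfl⟩ : ∃ t', t = t' + 1 := ⟨t - 1, by omega⟩
  have h' : ∀ M : Finset V, M.Nonempty → (∀ v ∈ M, 1 ≤ f v) →
      ∃ X, X ⊆ M ∩ U ∧ IndepOn G X ∧ PaintFromIn G t' (decMark f M) (U \ X) := h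
  simpa using h' M hne hf

lemma pf_zero {V : Type} [DecidableEq V] {G : SimpleGraph V} {f : V → ℕ}
    {U : Finset V} (h : PaintFromIn G 0 f U) : U = ∅ ∨ ∃ v, f v ≠ 0 := h

lemma parity_kill (n a b : ℕ) (f : Fin n → ℕ) (U : Finset (Fin n))
    (hab : a < b) (hbn : b < n)
    (hU : ∀ v : Fin n, a ≤ v.val → v.val ≤ b → v ∈ U)
    (hfa : ∀ v : Fin n, v.val = a → f v = 1)
    (hfb : ∀ v : Fin n, v.val = b → f v = 1)
    (hfi : ∀ v : Fin n, a < v.val → v.val < b → f v = 2)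
    (hf2 : ∀ v, f v ≤ 2)
    (hne2 : b = a + 1 → ∃ w : Fin n, (w.val < a ∨ b < w.val) ∧ 1 ≤ f w) :
    ¬ PaintFromIn (SimpleGraph.pathGraph n) 2 f U := by
  intro hP
  set p := (b - a) % 2 with hp
  set M₁ : Finset (Fin n) := univ.filter
    (fun v => (a ≤ v.val ∧ v.val ≤ b ∧ (v.val = b → p = 1)) ∨
      ((v.val < a ∨ b < v.val) ∧ f v = 2)) with hM₁def
  set M₂ : Finset (Fin n) := univ.filter
    (fun v => (a < v.val ∧ v.val < b) ∨ (v.val = b ∧ p = 0) ∨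
      ((v.val < a ∨ b < v.val) ∧ 1 ≤ f v)) with hM₂def
  have hmem1 : ∀ v : Fin n, v ∈ M₁ ↔ ((a ≤ v.val ∧ v.val ≤ b ∧ (v.val = b → p = 1)) ∨
      ((v.val < a ∨ b < v.val) ∧ f v = 2)) := by
    intro v; rw [hM₁def, mem_filter]; simp
  have hmem2 : ∀ v : Fin n, v ∈ M₂ ↔ ((a < v.val ∧ v.val < b) ∨ (v.val = b ∧ p = 0) ∨
      ((v.val < a ∨ b < v.val) ∧ 1 ≤ f v)) := by
    intro v; rw [hM₂def, mem_filter]; simp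
  have hp01 : p = 0 ∨ p = 1 := by omega
  -- round 1
  have hM₁ne : M₁.Nonempty :=
    ⟨⟨a, by omega⟩, (hmem1 _).2 (Or.inl (by refine ⟨le_refl a, ?_, ?_⟩ <;> simp <;> omega))⟩
  have hfM₁ : ∀ v ∈ M₁, 1 ≤ f v := by
    intro v hv
    rw [hmem1] at hv
    have h1 := hfa v; have h2 := hfb v; have h3 := hfi v
    omega
  obtain ⟨X₁, hX₁sub, hX₁ind, hP1⟩ := pf_elim hP (by norm_num) M₁ hM₁ne hfM₁
  norm_num at hP1
  -- round 2
  have hM₂ne : M₂.Nonempty := by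
    rcases Nat.lt_or_ge (a+1) b with h | h
    · refine ⟨⟨a+1, by omega⟩, (hmem2 _).2 (Or.inl ⟨?_, ?_⟩)⟩ <;> simp <;> omega
    · have hb' : b = a + 1 := by omega
      obtain ⟨w, hw1, hw2⟩ := hne2 hb'
      exact ⟨w, (hmem2 _).2 (Or.inr (Or.inr ⟨hw1, hw2⟩))⟩
  have hfM₂ : ∀ v ∈ M₂, 1 ≤ decMark f M₁ v := by
    intro v hv
    rw [hmem2] at hv
    have h1 := hfa v; have h2 := hfb v; have h3 := hfi v
    have hm1 := hmem1 v
    simp only [decMark]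
    split <;> rename_i hvM₁
    · rw [hm1] at hvM₁; omega
    · rw [hm1] at hvM₁; omega
  obtain ⟨X₂, hX₂sub, hX₂ind, hP0⟩ := pf_elim hP1 (by norm_num) M₂ hM₂ne hfM₂
  norm_num at hP0
  -- all marks are used up after the two rounds
  have hf₂ : ∀ v, decMark (decMark f M₁) M₂ v = 0 := by
    intro v
    have h1 := hfa v; have h2 := hfb v; have h3 := hfi v
    have hf2v := hf2 v
    by_cases hv1 : v ∈ M₁ <;> by_cases hv2 : v ∈ M₂ <;>
      simp only [decMark, hv1, hv2, if_true, if_false] <;>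
      rw [hmem1] at hv1 <;> rw [hmem2] at hv2 <;>
      omega
  rcases pf_zero hP0 with hUe | ⟨v, hv⟩
  swap
  · exact hv (hf₂ v)
  -- every segment vertex was colored: derive the parity contradiction
  have hcol : ∀ v : Fin n, a ≤ v.val → v.val ≤ b → (v ∈ X₁ ∨ v ∈ X₂) := by
    intro v hva hvb
    by_cases h1 : v ∈ X₁
    · exact Or.inl h1
    by_cases h2 : v ∈ X₂
    · exact Or.inr h2
    exfalso
    have hvin : v ∈ (U \ X₁) \ X₂ := by
      rw [mem_sdiff, mem_sdiff]; exact ⟨⟨hU v hva hvb, h1⟩, h2⟩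
    rw [hUe] at hvin
    exact absurd hvin (notMem_empty v)
  have hX₂X₁ : ∀ v, v ∈ X₂ → v ∉ X₁ := by
    intro v hv
    have h := hX₂sub hv
    rw [mem_inter, mem_sdiff] at h
    exact h.2.2
  have hX₁M : ∀ v, v ∈ X₁ → v ∈ M₁ := fun v hv => (mem_inter.1 (hX₁sub hv)).1
  have hX₂M : ∀ v, v ∈ X₂ → v ∈ M₂ := fun v hv => (mem_inter.1 (hX₂sub hv)).1
  have halt : ∀ k, a + k ≤ b → ∀ v : Fin n, v.val = a + k → (v ∈ X₁ ↔ k % 2 = 0) := by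
    intro k
    induction k with
    | zero =>
      intro hk v hval
      have h0 : (0 : ℕ) % 2 = 0 := rfl
      rw [h0]
      simp only [iff_true]
      rcases hcol v (by omega) (by omega) with h | h
      · exact h
      · exfalso
        have hm := hX₂M _ h
        rw [hmem2, hval] at hm
        omega
    | succ k ih =>
      intro hk v hval
      have hkk : a + k < n := by omega
      set u : Fin n := ⟨a + k, hkk⟩ with hu_def
      have huval : u.val = a + k := rfl
      have ih' := ih (by omega) u huval
      have hadj : (SimpleGraph.pathGraph n).Adj u v :=
        SimpleGraph.pathGraph_adj.2 (Or.inl (by omega))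
      have hu := hcol u (by omega) (by omega)
      have hw := hcol v (by omega) (by omega)
      have h11 : ¬(u ∈ X₁ ∧ v ∈ X₁) := fun ⟨q1, q2⟩ => hX₁ind _ q1 _ q2 hadj
      have h22 : ¬(u ∈ X₂ ∧ v ∈ X₂) := fun ⟨q1, q2⟩ => hX₂ind _ q1 _ q2 hadj
      have hC : v ∈ X₁ ↔ ¬(u ∈ X₁) := by
        constructor
        · intro hCv hA
          exact h11 ⟨hA, hCv⟩
        · intro hnA
          rcases hu with hA | hB
          · exact absurd hA hnA
          rcases hw with hCv | hD
          · exact hCv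
          · exact absurd ⟨hB, hD⟩ h22
      rw [hC, ih']
      omega
  have hvb := halt (b - a) (by omega) ⟨b, hbn⟩ (by exact (by omega : b = a + (b - a)))
  rcases hp01 with hp0 | hp1
  · -- p = 0 : b was marked in round 2 only, but parity forces it into round 1
    have hvbX : (⟨b, hbn⟩ : Fin n) ∈ X₁ := hvb.2 (by omega)
    have hm := hX₁M _ hvbX
    rw [hmem1] at hm
    have hval : (⟨b, hbn⟩ : Fin n).val = b := rfl
    rw [hval] at hm
    omega
  · -- p = 1 : b was marked in round 1 only, but parity forces it into round 2
    rcases hcol ⟨b, hbn⟩ (by exact le_of_lt hab) (by exact le_refl b) with h | h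
    · have := hvb.1 h; omega
    · have hm := hX₂M _ h
      rw [hmem2] at hm
      have hval : (⟨b, hbn⟩ : Fin n).val = b := rfl
      rw [hval] at hm
      omega

end MainAux

section MainLemma
open Finset PaintGame SimpleGraph Aux

lemma child_J {r j m m' S : ℕ} (hr : 3 ≤ r) (hj : j ≤ r - 2)
    (hm : 4 ≤ m) (hm'2 : 2 ≤ m') (hm' : 2 * m' ≤ m + 1)
    (hS : r + j + max (2 * cdiv m (2^j) - 4) 1 ≤ S) :
    ∃ j', j' ≤ (r-1) - 2 ∧ (r-1) + j' + max (2 * cdiv m' (2^j') - 4) 1 ≤ S - 2 := by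
  rcases Nat.eq_zero_or_pos j with rfl | hj1
  · refine ⟨0, by omega, ?_⟩
    rw [pow_zero, cdiv_one] at hS ⊢
    have h1 : max (2*m - 4) 1 = 2*m - 4 := max_eq_left (by omega)
    have h2 : max (2*m' - 4) 1 ≤ 2*m - 7 := max_le (by omega) (by omega)
    omega
  · refine ⟨j - 1, by omega, ?_⟩
    have hmm : m' ≤ cdiv m 2 := by
      have := le_mul_cdiv (show 0 < 2 by norm_num) m
      omega
    have hcd : cdiv m' (2^(j-1)) ≤ cdiv m (2^j) := cdiv_half_pow hj1 hmm
    have hmax : max (2 * cdiv m' (2^(j-1)) - 4) 1 ≤ max (2 * cdiv m (2^j) - 4) 1 :=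
      max_le_max (by omega) le_rfl
    omega

lemma main_lemma (n : ℕ) (r : ℕ) :
    ∀ (f : Fin n → ℕ) (U : Finset (Fin n)) (a b : ℕ),
    a < b → b < n →
    (∀ v : Fin n, a ≤ v.val → v.val ≤ b → v ∈ U) →
    (∀ v : Fin n, v.val = a → f v = 1) →
    (∀ v : Fin n, v.val = b → f v = 1) →
    (∀ v : Fin n, a < v.val → v.val < b → f v = 2) →
    (∀ v, f v ≤ 2) →
    2 ≤ r →
    (∃ j, j ≤ r - 2 ∧ r + j + max (2 * cdiv (b - a + 1) (2^j) - 4) 1 ≤ ∑ v, f v) →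
    ¬ PaintFromIn (SimpleGraph.pathGraph n) r f U := by
  induction r using Nat.strong_induction_on with
  | _ r IH =>
  intro f U a b hab hbn hU hfa hfb hfi hf2 hr2 hJ
  rcases eq_or_lt_of_le hr2 with hr2' | hr3
  · -- r = 2 : parity kill finishes the game
    obtain rfl : 2 = r := hr2'
    apply parity_kill n a b f U hab hbn hU hfa hfb hfi hf2
    intro hb1
    obtain ⟨j, hj, hS⟩ := hJ
    obtain rfl : j = 0 := by omega
    rw [pow_zero, cdiv_one] at hS
    have hS3 : 3 ≤ ∑ v, f v := by
      have he : b - a + 1 = 2 := by omega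
      rw [he] at hS
      norm_num at hS
      omega
    by_contra hc
    push_neg at hc
    have hz : ∀ v : Fin n, v ∉ ({⟨a, by omega⟩, ⟨b, hbn⟩} : Finset (Fin n)) → f v = 0 := by
      intro v hv
      simp only [Finset.mem_insert, Finset.mem_singleton] at hv
      push_neg at hv
      obtain ⟨hv1, hv2⟩ := hv
      have hv1' : v.val ≠ a := fun h => hv1 (Fin.ext h)
      have hv2' : v.val ≠ b := fun h => hv2 (Fin.ext h)
      have hcv := hc v
      omega
    have hsum2 : ∑ v, f v = ∑ v ∈ ({⟨a, by omega⟩, ⟨b, hbn⟩} : Finset (Fin n)), f v :=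
      (Finset.sum_subset (Finset.subset_univ _) (fun v _ hv => hz v hv)).symm
    have hpair : ∑ v ∈ ({⟨a, by omega⟩, ⟨b, hbn⟩} : Finset (Fin n)), f v = 2 := by
      rw [Finset.sum_pair (by
        intro h
        have := congrArg Fin.val h
        simp only at this
        omega)]
      rw [hfa _ rfl, hfb _ rfl]
    omega
  · -- r ≥ 3
    intro hP
    have hr3' : 3 ≤ r := hr3
    by_cases hm4 : 4 ≤ b - a + 1
    · -- split move: mark the middle pair
      set c := a + (b - a) / 2 with hcdef
      have hacb : a < c ∧ c + 1 < b := by constructor <;> omega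
      set vc : Fin n := ⟨c, by omega⟩ with hvc
      set vc1 : Fin n := ⟨c+1, by omega⟩ with hvc1
      have hvcval : vc.val = c := rfl
      have hvc1val : vc1.val = c + 1 := rfl
      have hvcne : vc ≠ vc1 := by
        intro h
        have := congrArg Fin.val h
        rw [hvcval, hvc1val] at this
        omega
      set M : Finset (Fin n) := {vc, vc1} with hM
      have hMf : ∀ v ∈ M, 1 ≤ f v := by
        intro v hv
        rw [hM, Finset.mem_insert, Finset.mem_singleton] at hv
        rcases hv with rfl | rfl
        · rw [hfi vc (by omega) (by omega)]; norm_num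
        · rw [hfi vc1 (by omega) (by omega)]; norm_num
      obtain ⟨X, hXsub, hXind, hP1⟩ := pf_elim hP (by omega) M ⟨vc, by simp [hM]⟩ hMf
      have hsum : ∑ v, decMark f M v + 2 = ∑ v, f v := by
        have h1 := sum_decMark f M hMf
        have h2 : M.card = 2 := by rw [hM, Finset.card_pair hvcne]
        omega
      have hXsub' : ∀ v, v ∈ X → v = vc ∨ v = vc1 := by
        intro v hv
        have h := (Finset.mem_inter.1 (hXsub hv)).1
        rw [hM, Finset.mem_insert, Finset.mem_singleton] at h
        exact h
      have hnot2 : ¬(vc ∈ X ∧ vc1 ∈ X) := by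
        rintro ⟨h1, h2⟩
        exact hXind _ h1 _ h2 (SimpleGraph.pathGraph_adj.2 (Or.inl (by omega)))
      have hdM : ∀ v : Fin n, decMark f M v = if v = vc ∨ v = vc1 then f v - 1 else f v := by
        intro v
        simp only [decMark, hM, Finset.mem_insert, Finset.mem_singleton]
      have hdMout : ∀ v : Fin n, v.val ≠ c → v.val ≠ c + 1 → decMark f M v = f v := by
        intro v h1 h2
        rw [hdM, if_neg]
        rintro (rfl | rfl)
        · exact h1 hvcval
        · exact h2 hvc1val
      have hf2' : ∀ v, decMark f M v ≤ 2 := by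
        intro v
        simp only [decMark]
        split
        · have := hf2 v; omega
        · exact hf2 v
      obtain ⟨j, hjle, hjS⟩ := hJ
      by_cases hxc : vc ∈ X
      · -- Painter colored c; new segment [c+1, b]
        have hxc1 : vc1 ∉ X := fun h => hnot2 ⟨hxc, h⟩
        refine IH (r-1) (by omega) (decMark f M) (U \ X) (c+1) b (by omega) hbn
          ?_ ?_ ?_ ?_ hf2' (by omega) ?_ hP1
        · intro v hv1 hv2
          rw [Finset.mem_sdiff]
          refine ⟨hU v (by omega) hv2, fun hvX => ?_⟩
          rcases hXsub' v hvX with rfl | rfl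
          · rw [hvcval] at hv1; omega
          · exact hxc1 hvX
        · intro v hv
          have hveq : v = vc1 := Fin.ext (by rw [hvc1val]; exact hv)
          rw [hdM, if_pos (Or.inr hveq), hveq, hfi vc1 (by omega) (by omega)]
        · intro v hv
          rw [hdMout v (by omega) (by omega)]
          exact hfb v hv
        · intro v hv1 hv2
          rw [hdMout v (by omega) (by omega)]
          exact hfi v (by omega) hv2
        · obtain ⟨j', hj'le, hj'S⟩ := child_J hr3' hjle hm4
            (show 2 ≤ b - c by omega) (show 2*(b-c) ≤ (b - a + 1) + 1 by omega) hjS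
          refine ⟨j', hj'le, ?_⟩
          have he : b - (c+1) + 1 = b - c := by omega
          rw [he]
          omega
      · by_cases hxc1 : vc1 ∈ X
        · -- Painter colored c+1; new segment [a, c]
          refine IH (r-1) (by omega) (decMark f M) (U \ X) a c (by omega) (by omega)
            ?_ ?_ ?_ ?_ hf2' (by omega) ?_ hP1
          · intro v hv1 hv2
            rw [Finset.mem_sdiff]
            refine ⟨hU v hv1 (by omega), fun hvX => ?_⟩
            rcases hXsub' v hvX with rfl | rfl
            · exact hxc hvX
            · rw [hvc1val] at hv2; omega
          · intro v hv
            rw [hdMout v (by omega) (by omega)]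
            exact hfa v hv
          · intro v hv
            have hveq : v = vc := Fin.ext (by rw [hvcval]; exact hv)
            rw [hdM, if_pos (Or.inl hveq), hveq, hfi vc (by omega) (by omega)]
          · intro v hv1 hv2
            rw [hdMout v (by omega) (by omega)]
            exact hfi v hv1 (by omega)
          · obtain ⟨j', hj'le, hj'S⟩ := child_J hr3' hjle hm4
              (show 2 ≤ c - a + 1 by omega) (show 2*(c - a + 1) ≤ (b - a + 1) + 1 by omega) hjS
            refine ⟨j', hj'le, ?_⟩
            omega
        · -- Painter colored nothing; new segment [c, c+1]
          refine IH (r-1) (by omega) (decMark f M) (U \ X) c (c+1) (by omega) (by omega)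
            ?_ ?_ ?_ ?_ hf2' (by omega) ?_ hP1
          · intro v hv1 hv2
            rw [Finset.mem_sdiff]
            refine ⟨hU v (by omega) (by omega), fun hvX => ?_⟩
            rcases hXsub' v hvX with rfl | rfl
            · exact hxc hvX
            · exact hxc1 hvX
          · intro v hv
            have hveq : v = vc := Fin.ext (by rw [hvcval]; exact hv)
            rw [hdM, if_pos (Or.inl hveq), hveq, hfi vc (by omega) (by omega)]
          · intro v hv
            have hveq : v = vc1 := Fin.ext (by rw [hvc1val]; exact hv)
            rw [hdM, if_pos (Or.inr hveq), hveq, hfi vc1 (by omega) (by omega)]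
          · intro v hv1 hv2
            omega
          · obtain ⟨j', hj'le, hj'S⟩ := child_J hr3' hjle hm4
              (show 2 ≤ 2 by norm_num) (show 2*2 ≤ (b - a + 1) + 1 by omega) hjS
            refine ⟨j', hj'le, ?_⟩
            have he : c + 1 - c + 1 = 2 := by omega
            rw [he]
            omega
    · -- pad move: mark one vertex outside the (short) segment
      obtain ⟨j, hjle, hjS⟩ := hJ
      have hSlow : r + (b - a) ≤ ∑ v, f v := by
        rcases Nat.eq_zero_or_pos j with rfl | hj1
        · rw [pow_zero, cdiv_one] at hjS
          have hA := le_max_left (2 * (b - a + 1) - 4) 1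
          have hB := le_max_right (2 * (b - a + 1) - 4) 1
          omega
        · have hB := le_max_right (2 * cdiv (b - a + 1) (2^j) - 4) 1
          omega
      have hwex : ∃ w : Fin n, (w.val < a ∨ b < w.val) ∧ 1 ≤ f w := by
        by_contra hc
        push_neg at hc
        rcases (show b = a + 1 ∨ b = a + 2 by omega) with hb' | hb'
        · have hz : ∀ v : Fin n, v ∉ ({⟨a, by omega⟩, ⟨b, hbn⟩} : Finset (Fin n)) → f v = 0 := by
            intro v hv
            simp only [Finset.mem_insert, Finset.mem_singleton] at hv
            push_neg at hv
            have hv1' : v.val ≠ a := fun h => hv.1 (Fin.ext h)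
            have hv2' : v.val ≠ b := fun h => hv.2 (Fin.ext h)
            have hcv := hc v
            omega
          have hsum2 : ∑ v, f v = ∑ v ∈ ({⟨a, by omega⟩, ⟨b, hbn⟩} : Finset (Fin n)), f v :=
            (Finset.sum_subset (Finset.subset_univ _) (fun v _ hv => hz v hv)).symm
          have hpair : ∑ v ∈ ({⟨a, by omega⟩, ⟨b, hbn⟩} : Finset (Fin n)), f v = 2 := by
            rw [Finset.sum_pair (by
              intro h
              have := congrArg Fin.val h
              simp only at this
              omega)]
            rw [hfa _ rfl, hfb _ rfl]
          omega
        · have hz : ∀ v : Fin n, v ∉ ({⟨a, by omega⟩, ⟨a+1, by omega⟩, ⟨b, hbn⟩} : Finset (Fin n)) → f v = 0 := by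
            intro v hv
            simp only [Finset.mem_insert, Finset.mem_singleton] at hv
            push_neg at hv
            have hv1' : v.val ≠ a := fun h => hv.1 (Fin.ext h)
            have hv2' : v.val ≠ a + 1 := fun h => hv.2.1 (Fin.ext h)
            have hv3' : v.val ≠ b := fun h => hv.2.2 (Fin.ext h)
            have hcv := hc v
            omega
          have hsum2 : ∑ v, f v = ∑ v ∈ ({⟨a, by omega⟩, ⟨a+1, by omega⟩, ⟨b, hbn⟩} : Finset (Fin n)), f v :=
            (Finset.sum_subset (Finset.subset_univ _) (fun v _ hv => hz v hv)).symm
          have htrip : ∑ v ∈ ({⟨a, by omega⟩, ⟨a+1, by omega⟩, ⟨b, hbn⟩} : Finset (Fin n)), f v = 4 := by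
            rw [Finset.sum_insert (by
              simp only [Finset.mem_insert, Finset.mem_singleton]
              push_neg
              constructor <;> intro h <;> have := congrArg Fin.val h <;> simp only at this <;> omega)]
            rw [Finset.sum_pair (by
              intro h
              have := congrArg Fin.val h
              simp only at this
              omega)]
            rw [hfa (⟨a, by omega⟩ : Fin n) rfl, hfb (⟨b, hbn⟩ : Fin n) rfl,
              hfi (⟨a+1, by omega⟩ : Fin n) (by exact Nat.lt_succ_self a)
                (by exact (show a + 1 < b by omega))]
            norm_num
          omega
      obtain ⟨w, hwpos, hwf⟩ := hwex
      obtain ⟨X, hXsub, hXind, hP1⟩ := pf_elim hP (by omega) {w} ⟨w, Finset.mem_singleton_self w⟩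
        (by intro v hv; rw [Finset.mem_singleton] at hv; subst hv; exact hwf)
      have hsum : ∑ v, decMark f {w} v + 1 = ∑ v, f v := by
        have h1 := sum_decMark f {w}
          (by intro v hv; rw [Finset.mem_singleton] at hv; subst hv; exact hwf)
        rw [Finset.card_singleton] at h1
        exact h1
      have hXw : ∀ v, v ∈ X → v = w := fun v hv =>
        Finset.mem_singleton.1 (Finset.mem_inter.1 (hXsub hv)).1
      have hdM : ∀ v : Fin n, a ≤ v.val → v.val ≤ b → decMark f {w} v = f v := by
        intro v h1 h2
        have hvn : v ∉ ({w} : Finset (Fin n)) := by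
          rw [Finset.mem_singleton]
          intro h
          subst h
          omega
        simp [decMark, hvn]
      refine IH (r-1) (by omega) (decMark f {w}) (U \ X) a b hab hbn
        ?_ ?_ ?_ ?_ ?_ (by omega) ?_ hP1
      · intro v h1 h2
        rw [Finset.mem_sdiff]
        refine ⟨hU v h1 h2, fun hvX => ?_⟩
        have := hXw v hvX
        subst this
        omega
      · intro v hv
        rw [hdM v (by omega) (by omega)]
        exact hfa v hv
      · intro v hv
        rw [hdM v (by omega) (by omega)]
        exact hfb v hv
      · intro v h1 h2
        rw [hdM v (by omega) (by omega)]
        exact hfi v h1 h2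
      · intro v
        simp only [decMark]
        split
        · have := hf2 v; omega
        · exact hf2 v
      · refine ⟨0, by omega, ?_⟩
        rw [pow_zero, cdiv_one]
        have hmaxle : max (2 * (b - a + 1) - 4) 1 ≤ b - a := max_le (by omega) (by omega)
        omega

end MainLemma


/-- Lemma `2-path1`.  For every `n ≥ 3`, the path `P_n` on `n` vertices
(with `f''` assigning `1` to the endpoints and `2` to internal vertices) is not
`[f'',t]`-paintable for every integer `t` with `2 ≤ t ≤ 2n − 2 − log₂ n`. -/
theorem path_not_paintableIn (n : ℕ) (hn : 3 ≤ n) (t : ℕ) (ht2 : 2 ≤ t)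
    (ht : (t : ℝ) ≤ 2 * n - 2 - Real.logb 2 n) :
    ¬ PaintGame.PaintableIn (SimpleGraph.pathGraph n)
        (fun v => if v.val = 0 ∨ v.val = n - 1 then 1 else 2) t := by
  intro hPaint
  set f : Fin n → ℕ := fun v => if v.val = 0 ∨ v.val = n - 1 then 1 else 2 with hf
  -- total number of marks
  have hcard2 : (Finset.univ.filter (fun v : Fin n => v.val = 0 ∨ v.val = n - 1)).card = 2 := by
    have hset : Finset.univ.filter (fun v : Fin n => v.val = 0 ∨ v.val = n - 1)
        = {(⟨0, by omega⟩ : Fin n), ⟨n-1, by omega⟩} := by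
      ext v
      simp only [Finset.mem_filter, Finset.mem_univ, true_and, Finset.mem_insert,
        Finset.mem_singleton, Fin.ext_iff]
    rw [hset, Finset.card_pair (by
      intro h
      have := congrArg Fin.val h
      simp only at this
      omega)]
  have hsum : ∑ v, f v = 2 * n - 2 := by
    rw [hf]
    rw [Finset.sum_ite (f := fun _ => 1) (g := fun _ => 2)]
    rw [Finset.sum_const, Finset.sum_const]
    have hcards := Finset.card_filter_add_card_filter_not
      (s := (Finset.univ : Finset (Fin n))) (p := fun v : Fin n => v.val = 0 ∨ v.val = n - 1)
    rw [Finset.card_univ, Fintype.card_fin] at hcards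
    rw [hcard2] at hcards
    simp only [smul_eq_mul]
    rw [hcard2]
    omega
  -- the ceiling log bound
  set cl := Nat.clog 2 n with hcl
  have hc2 : 2 ≤ cl := by
    by_contra hcc
    push_neg at hcc
    have h1 := Nat.le_pow_clog (by norm_num : 1 < 2) n
    rw [← hcl] at h1
    have h2 : (2:ℕ)^cl ≤ 2 := by
      calc (2:ℕ)^cl ≤ 2^1 := Nat.pow_le_pow_right (by norm_num) (by omega)
      _ = 2 := by norm_num
    omega
  have hpow : 2^(cl - 1) < n := Nat.pow_pred_clog_lt_self (by norm_num) (by omega)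
  have hnle : n ≤ 2^cl := Nat.le_pow_clog (by norm_num) n
  have htc : t + cl ≤ 2*n - 2 := by
    have hlogb : ((cl - 1 : ℕ) : ℝ) < Real.logb 2 n := by
      have h1 : ((2:ℕ)^(cl - 1) : ℝ) < (n : ℝ) := by exact_mod_cast hpow
      have h2 : ((cl - 1 : ℕ) : ℝ) = Real.logb 2 ((2:ℝ)^(cl - 1)) := by
        rw [Real.logb_pow, Real.logb_self_eq_one (by norm_num)]
        ring
      rw [h2]
      refine Real.logb_lt_logb (by norm_num) (by positivity) ?_
      push_cast at h1
      exact h1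
    have hfin : (t : ℝ) + ((cl - 1 : ℕ) : ℝ) < 2 * (n:ℝ) - 2 := by linarith
    have hnat : (t : ℝ) + ((cl - 1 : ℕ) : ℝ) = ((t + (cl - 1) : ℕ) : ℝ) := by push_cast; ring
    have h2n : (2 * (n:ℝ) - 2) = ((2*n - 2 : ℕ) : ℝ) := by
      have : (2:ℕ) ≤ 2 * n := by omega
      push_cast [Nat.cast_sub this]
      ring
    rw [hnat, h2n, Nat.cast_lt] at hfin
    omega
  -- the invariant witness
  have hJ : ∃ j, j ≤ t - 2 ∧
      t + j + max (2 * Aux.cdiv ((n-1) - 0 + 1) (2^j) - 4) 1 ≤ ∑ v, f v := by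
    rw [hsum]
    have hseg : (n - 1) - 0 + 1 = n := by omega
    rw [hseg]
    by_cases hcase : cl - 1 ≤ t - 2
    · refine ⟨cl - 1, hcase, ?_⟩
      have hle2 : Aux.cdiv n (2^(cl-1)) ≤ 2 := by
        rw [Aux.cdiv_le_iff (by positivity)]
        calc n ≤ 2^cl := hnle
        _ = 2^(cl-1) * 2 := by rw [← pow_succ]; congr 1; omega
      have hmax : max (2 * Aux.cdiv n (2^(cl-1)) - 4) 1 = 1 := max_eq_right (by omega)
      rw [hmax]
      omega
    · refine ⟨t - 2, le_refl _, ?_⟩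
      push_neg at hcase
      set d := t - 2 with hd
      have hdc : d + 1 ≤ cl - 1 := by omega
      have hpd : 2^(d+1) < n := by
        calc 2^(d+1) ≤ 2^(cl-1) := Nat.pow_le_pow_right (by norm_num) hdc
        _ < n := hpow
      have hpd' : 2^d < n := by
        have : (2:ℕ)^d ≤ 2^(d+1) := Nat.pow_le_pow_right (by norm_num) (by omega)
        omega
      have hx3 : 3 ≤ Aux.cdiv n (2^d) := by
        by_contra hxc
        push_neg at hxc
        have := (Aux.cdiv_le_iff (b := 2^d) (by positivity) (a := n) (c := 2)).1 (by omega)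
        have h2 : (2:ℕ)^d * 2 = 2^(d+1) := by rw [pow_succ]
        omega
      have hceil := Aux.cdiv_add_le n d hpd'
      have hmax : max (2 * Aux.cdiv n (2^d) - 4) 1 = 2 * Aux.cdiv n (2^d) - 4 :=
        max_eq_left (by omega)
      rw [hmax]
      omega
  exact main_lemma n t f Finset.univ 0 (n-1) (by omega) (by omega)
    (fun v _ _ => Finset.mem_univ v)
    (fun v hv => by rw [hf]; simp only; rw [if_pos (Or.inl hv)])
    (fun v hv => by rw [hf]; simp only; rw [if_pos (Or.inr hv)])
    (fun v hv1 hv2 => by rw [hf]; simp only; rw [if_neg (by omega)])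
    (fun v => by rw [hf]; simp only; split <;> omega)
    ht2 hJ hPaint
end
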